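/- For any graph G, if k ≥ deg(G) + 1 (degeneracy plus one), then G is k-Kempe-mixing: any two proper k-colourings are connected by a sequence of Kempe chain recolourings. -/

import Mathlib

/-!
Induction on the number of vertices. Delete a vertex `v` with at most `d < k` neighbours; by
induction `G - v` is Kempe-mixing, and every Kempe change of `G - v` (swapping `a`, `b`) lifts to
`G`. If some colour other than `a`, `b` is missing around `v`, first recolour `v` with it, so that
`v` lies in no `{a, b}`-chain. Otherwise the `k - 2` other colours occupy all but at most one of
the at most `k - 1` neighbours of `v`, so `v` has at most one neighbour in the `{a, b}`-subgraph,
and the `{a, b}`-chains of `G` restrict to those of `G - v`. At the end `v` is recoloured to its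
target colour, which is absent from its neighbourhood.
-/

/-- `c` is a proper `k`-colouring of `G`. -/
def IsProperColoring {V : Type} (G : SimpleGraph V) {k : ℕ} (c : V → Fin k) : Prop :=
  ∀ ⦃u v : V⦄, G.Adj u v → c u ≠ c v

/-- A single-vertex recolouring step between proper `k`-colourings. -/
def RecolStep {V : Type} (G : SimpleGraph V) {k : ℕ} (c c' : V → Fin k) : Prop :=
  IsProperColoring G c ∧ IsProperColoring G c' ∧
    ∃ v : V, c v ≠ c' v ∧ ∀ w : V, w ≠ v → c w = c' w

/-- `G` is `k`-mixing: any two proper `k`-colourings are connected by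
single-vertex recolourings. -/
def IsMixing {V : Type} (G : SimpleGraph V) (k : ℕ) : Prop :=
  ∀ c c' : V → Fin k, IsProperColoring G c → IsProperColoring G c' →
    Relation.ReflTransGen (RecolStep G) c c'
/-- Swap colours `a` and `b` on the set `S`. -/
noncomputable def kempeSwap {V : Type} {k : ℕ} (c : V → Fin k) (a b : Fin k) (S : Set V) :
    V → Fin k := by
  classical
  exact fun v => if v ∈ S then (if c v = a then b else if c v = b then a else c v) else c v

/-- `S` is a Kempe chain of the colouring `c` for colours `a`, `b`: a connected
component of the subgraph induced on the vertices coloured `a` or `b`. -/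
def IsKempeChain {V : Type} (G : SimpleGraph V) {k : ℕ} (c : V → Fin k) (a b : Fin k)
    (S : Set V) : Prop :=
  ∃ v₀ : V, (c v₀ = a ∨ c v₀ = b) ∧
    S = {v | Relation.ReflTransGen
          (fun x y => (c x = a ∨ c x = b) ∧ (c y = a ∨ c y = b) ∧ G.Adj x y) v₀ v}

/-- A Kempe chain recolouring step between proper `k`-colourings. -/
def KempeStep {V : Type} (G : SimpleGraph V) {k : ℕ} (c c' : V → Fin k) : Prop :=
  IsProperColoring G c ∧ IsProperColoring G c' ∧
    ∃ (a b : Fin k) (S : Set V), a ≠ b ∧ IsKempeChain G c a b S ∧ c' = kempeSwap c a b S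

/-- `G` is `k`-Kempe-mixing. -/
def IsKempeMixing {V : Type} (G : SimpleGraph V) (k : ℕ) : Prop :=
  ∀ c c' : V → Fin k, IsProperColoring G c → IsProperColoring G c' →
    Relation.ReflTransGen (KempeStep G) c c'
/-- `G` is `d`-degenerate: every (induced sub)finset has a vertex with at most `d`
neighbours inside it. -/
def Degenerate {V : Type} [DecidableEq V] (G : SimpleGraph V) [DecidableRel G.Adj] (d : ℕ) : Prop :=
  ∀ S : Finset V, S.Nonempty → ∃ v ∈ S, (S.filter (G.Adj v)).card ≤ d

open Finset Relation

section KempeChains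

variable {V : Type} {G : SimpleGraph V} {k : ℕ} {c : V → Fin k} {a b : Fin k} {v₀ x y : V}

def KempeAdj (G : SimpleGraph V) (c : V → Fin k) (a b : Fin k) (x y : V) : Prop :=
  (c x = a ∨ c x = b) ∧ (c y = a ∨ c y = b) ∧ G.Adj x y

def kempeChain (G : SimpleGraph V) (c : V → Fin k) (a b : Fin k) (v₀ : V) : Set V :=
  {x | ReflTransGen (KempeAdj G c a b) v₀ x}

lemma KempeAdj.symm (h : KempeAdj G c a b x y) : KempeAdj G c a b y x :=
  ⟨h.2.1, h.1, h.2.2.symm⟩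

lemma isKempeChain_kempeChain (h₀ : c v₀ = a ∨ c v₀ = b) :
    IsKempeChain G c a b (kempeChain G c a b v₀) :=
  ⟨v₀, h₀, rfl⟩

lemma eq_or_eq_of_mem_kempeChain (h₀ : c v₀ = a ∨ c v₀ = b) (hx : x ∈ kempeChain G c a b v₀) :
    c x = a ∨ c x = b := by
  obtain rfl | ⟨_, _, hx⟩ := (ReflTransGen.cases_tail_iff _ _ _).1 hx
  exacts [h₀, hx.2.1]

lemma mem_kempeChain_of_adj (h₀ : c v₀ = a ∨ c v₀ = b) (hx : x ∈ kempeChain G c a b v₀)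
    (hxy : G.Adj x y) (hy : c y = a ∨ c y = b) : y ∈ kempeChain G c a b v₀ :=
  ReflTransGen.tail hx ⟨eq_or_eq_of_mem_kempeChain h₀ hx, hy, hxy⟩

lemma kempeChain_eq_singleton (h : ∀ y, ¬ KempeAdj G c a b v₀ y) :
    kempeChain G c a b v₀ = {v₀} := by
  ext x
  change ReflTransGen _ v₀ x ↔ x = v₀
  rw [ReflTransGen.cases_head_iff]
  simp [h, eq_comm]

lemma kempeSwap_apply_of_mem {S : Set V} (hx : x ∈ S) :
    kempeSwap c a b S x = Equiv.swap a b (c x) := by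
  simp [kempeSwap, hx, Equiv.swap_apply_def]

lemma kempeSwap_apply_of_notMem {S : Set V} (hx : x ∉ S) : kempeSwap c a b S x = c x := by
  simp [kempeSwap, hx]

lemma IsProperColoring.kempeSwap_kempeChain (hc : IsProperColoring G c) (h₀ : c v₀ = a ∨ c v₀ = b) :
    IsProperColoring G (kempeSwap c a b (kempeChain G c a b v₀)) := by
  set S := kempeChain G c a b v₀
  -- an edge leaving the chain ends at a vertex coloured neither `a` nor `b`
  have boundary : ∀ u w, G.Adj u w → u ∈ S → w ∉ S →
      kempeSwap c a b S u ≠ kempeSwap c a b S w := by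
    intro u w huw hu hw
    have hcw : ¬ (c w = a ∨ c w = b) := fun h => hw (mem_kempeChain_of_adj h₀ hu huw h)
    rw [kempeSwap_apply_of_mem hu, kempeSwap_apply_of_notMem hw]
    rcases eq_or_eq_of_mem_kempeChain h₀ hu with h | h <;> rw [h] <;> grind
  intro u w huw
  by_cases hu : u ∈ S <;> by_cases hw : w ∈ S
  · simpa [kempeSwap_apply_of_mem hu, kempeSwap_apply_of_mem hw] using hc huw
  · exact boundary u w huw hu hw
  · exact (boundary w u huw.symm hw hu).symm
  · simpa [kempeSwap_apply_of_notMem hu, kempeSwap_apply_of_notMem hw] using hc huw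

lemma IsProperColoring.of_reflTransGen_kempeStep {c' : V → Fin k} (hc : IsProperColoring G c)
    (h : ReflTransGen (KempeStep G) c c') : IsProperColoring G c' := by
  obtain rfl | ⟨_, _, h⟩ := (ReflTransGen.cases_tail_iff _ _ _).1 h
  exacts [hc, h.2.1]

lemma IsProperColoring.comap {W : Type} (hc : IsProperColoring G c) (f : W → V) :
    IsProperColoring (G.comap f) (c ∘ f) :=
  fun _ _ h => hc h

/-- The `(c v, e)`-Kempe chain of `v` is `{v}`. -/
lemma reflTransGen_kempeStep_update [DecidableEq V] (hc : IsProperColoring G c) {v : V} {e : Fin k}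
    (he : ∀ x, G.Adj v x → c x ≠ e) : ReflTransGen (KempeStep G) c (Function.update c v e) := by
  rcases eq_or_ne e (c v) with rfl | hne
  · simpa using ReflTransGen.refl
  have hS : kempeChain G c (c v) e v = {v} :=
    kempeChain_eq_singleton fun y ⟨_, hy, hvy⟩ => hy.elim (hc hvy ·.symm) (he y hvy)
  have hupd : Function.update c v e = kempeSwap c (c v) e {v} := by
    funext x
    by_cases hx : x = v
    · subst hx; simp [kempeSwap_apply_of_mem]
    · simp [hx, kempeSwap_apply_of_notMem]
  refine .single ⟨hc, ?_, c v, e, {v}, hne.symm, hS ▸ isKempeChain_kempeChain (Or.inl rfl), hupd⟩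
  rw [hupd, ← hS]
  exact hc.kempeSwap_kempeChain (Or.inl rfl)

end KempeChains

section DeleteVertex

variable {V : Type} {G : SimpleGraph V} {k : ℕ} {γ : V → Fin k} {a b : Fin k} {v : V}

lemma mem_kempeChain_comap_val_iff (hv : {x | KempeAdj G γ a b v x}.Subsingleton)
    (v₀ u : {u // u ≠ v}) :
    (u : V) ∈ kempeChain G γ a b v₀ ↔
      u ∈ kempeChain (G.comap Subtype.val) (γ ∘ Subtype.val) a b v₀ := by
  refine ⟨fun h => ?_, fun h => ReflTransGen.lift Subtype.val (fun _ _ h => h) _ _ h⟩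
  -- a walk through `v` enters and leaves it by the same neighbour, so it can be shortcut
  suffices key : ∀ x ∈ kempeChain G γ a b v₀,
      (∀ hx : x ≠ v, ⟨x, hx⟩ ∈ kempeChain (G.comap Subtype.val) (γ ∘ Subtype.val) a b v₀) ∧
      (x = v → ∀ w (hw : w ≠ v), KempeAdj G γ a b v w →
        ⟨w, hw⟩ ∈ kempeChain (G.comap Subtype.val) (γ ∘ Subtype.val) a b v₀) from
    (key u h).1 u.2
  intro x hx
  induction hx with
  | refl => exact ⟨fun _ => .refl, fun h => absurd h v₀.2⟩
  | @tail x y _ hxy ih =>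
    refine ⟨fun hy => ?_, fun hy w hw hvw => ?_⟩
    · by_cases hx : x = v
      · subst hx
        exact ih.2 rfl y hy hxy
      · exact (ih.1 hx).tail hxy
    · subst hy
      obtain rfl : w = x := hv hvw hxy.symm
      exact ih.1 hw

lemma kempeSwap_kempeChain_comp_val (hv : {x | KempeAdj G γ a b v x}.Subsingleton)
    (v₀ : {u // u ≠ v}) :
    kempeSwap γ a b (kempeChain G γ a b v₀) ∘ Subtype.val =
      kempeSwap (γ ∘ Subtype.val) a b
        (kempeChain (G.comap Subtype.val) (γ ∘ Subtype.val) a b v₀) := by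
  funext u
  have hiff := mem_kempeChain_comap_val_iff hv v₀ u
  by_cases hu : (u : V) ∈ kempeChain G γ a b v₀
  · simp [kempeSwap_apply_of_mem hu, kempeSwap_apply_of_mem (hiff.1 hu)]
  · simp [kempeSwap_apply_of_notMem hu, kempeSwap_apply_of_notMem (mt hiff.2 hu)]

variable [Fintype V] [DecidableRel G.Adj]

lemma subsingleton_kempeAdj_of_card_lt (hdeg : (univ.filter (G.Adj v)).card < k) (hab : a ≠ b)
    (hall : ∀ e, e ≠ a → e ≠ b → ∃ x, G.Adj v x ∧ γ x = e) :
    {x | KempeAdj G γ a b v x}.Subsingleton := by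
  set N := univ.filter (G.Adj v)
  have hother : k - 2 ≤ (N.filter fun x => ¬(γ x = a ∨ γ x = b)).card := by
    calc k - 2 = ({a, b} : Finset (Fin k))ᶜ.card := by
          rw [card_compl, card_pair hab, Fintype.card_fin]
      _ ≤ ((N.filter fun x => ¬(γ x = a ∨ γ x = b)).image γ).card := by
          refine card_le_card fun e he => ?_
          simp only [mem_compl, mem_insert, mem_singleton, not_or] at he
          obtain ⟨x, hvx, rfl⟩ := hall e he.1 he.2
          exact mem_image_of_mem γ (by simp [N, hvx, he.1, he.2])
      _ ≤ _ := card_image_le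
  have hsplit := card_filter_add_card_filter_not (s := N) fun x => γ x = a ∨ γ x = b
  have hab_nbrs : (N.filter fun x => γ x = a ∨ γ x = b).card ≤ 1 := by omega
  intro x hx y hy
  exact card_le_one.1 hab_nbrs x (by simp [N, hx.2.2, hx.2.1]) y (by simp [N, hy.2.2, hy.2.1])

variable [DecidableEq V]

lemma exists_reflTransGen_kempeStep_subsingleton_kempeAdj (hγ : IsProperColoring G γ)
    (hdeg : (univ.filter (G.Adj v)).card < k) (hab : a ≠ b) :
    ∃ γ', ReflTransGen (KempeStep G) γ γ' ∧
      γ' ∘ Subtype.val = γ ∘ (Subtype.val : {u // u ≠ v} → V) ∧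
      {x | KempeAdj G γ' a b v x}.Subsingleton := by
  by_cases hmiss : ∃ e, e ≠ a ∧ e ≠ b ∧ ∀ x, G.Adj v x → γ x ≠ e
  · obtain ⟨e, hea, heb, he⟩ := hmiss
    refine ⟨Function.update γ v e, reflTransGen_kempeStep_update hγ he, ?_,
      fun x hx => absurd hx.1 (by simp [hea, heb])⟩
    funext u
    simp [Function.update_of_ne u.2]
  · push Not at hmiss
    exact ⟨γ, .refl, rfl, subsingleton_kempeAdj_of_card_lt hdeg hab hmiss⟩

lemma KempeStep.exists_lift (hγ : IsProperColoring G γ)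
    (hdeg : (univ.filter (G.Adj v)).card < k) {c₂ : {u // u ≠ v} → Fin k}
    (h : KempeStep (G.comap Subtype.val) (γ ∘ Subtype.val) c₂) :
    ∃ γ₂, ReflTransGen (KempeStep G) γ γ₂ ∧ γ₂ ∘ Subtype.val = c₂ := by
  obtain ⟨-, -, a, b, S, hab, ⟨v₀, h₀, rfl⟩, rfl⟩ := h
  obtain ⟨γ', hγγ', hres, hv⟩ := exists_reflTransGen_kempeStep_subsingleton_kempeAdj hγ hdeg hab
  have hγ' := hγ.of_reflTransGen_kempeStep hγγ'
  have h₀' : γ' v₀ = a ∨ γ' v₀ = b := by rwa [← hres] at h₀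
  refine ⟨_, hγγ'.tail ⟨hγ', hγ'.kempeSwap_kempeChain h₀', a, b, _, hab,
    isKempeChain_kempeChain h₀', rfl⟩, ?_⟩
  rw [kempeSwap_kempeChain_comp_val hv, hres]
  rfl

lemma exists_reflTransGen_kempeStep_lift (hγ : IsProperColoring G γ)
    (hdeg : (univ.filter (G.Adj v)).card < k) {c₂ : {u // u ≠ v} → Fin k}
    (h : ReflTransGen (KempeStep (G.comap Subtype.val)) (γ ∘ Subtype.val) c₂) :
    ∃ γ₂, ReflTransGen (KempeStep G) γ γ₂ ∧ γ₂ ∘ Subtype.val = c₂ := by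
  induction h with
  | refl => exact ⟨γ, .refl, rfl⟩
  | tail _ hstep ih =>
    obtain ⟨γ₁, hγγ₁, rfl⟩ := ih
    obtain ⟨γ₂, hγ₁γ₂, rfl⟩ := hstep.exists_lift (hγ.of_reflTransGen_kempeStep hγγ₁) hdeg
    exact ⟨γ₂, hγγ₁.trans hγ₁γ₂, rfl⟩

end DeleteVertex

lemma Degenerate.comap {V W : Type} [DecidableEq V] [DecidableEq W] {G : SimpleGraph V}
    [DecidableRel G.Adj] {d : ℕ} (hdeg : Degenerate G d) {f : W → V} (hf : Function.Injective f) :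
    Degenerate (G.comap f) d := by
  intro S hS
  obtain ⟨_, hx, hdx⟩ := hdeg (S.image f) (hS.image f)
  obtain ⟨u, hu, rfl⟩ := mem_image.1 hx
  refine ⟨u, hu, le_trans (card_le_card_of_injOn f (fun w hw => ?_) hf.injOn) hdx⟩
  obtain ⟨hwS, huw⟩ := mem_filter.1 hw
  exact mem_filter.2 ⟨mem_image_of_mem f hwS, huw⟩

/-- If `G` has degeneracy at most `d` and `k ≥ d + 1`, then `G` is `k`-Kempe-mixing. -/
theorem degeneracy_kempe_mixing {V : Type} [Fintype V] [DecidableEq V]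
    (G : SimpleGraph V) [DecidableRel G.Adj] (d k : ℕ)
    (hdeg : Degenerate G d) (hk : d + 1 ≤ k) : IsKempeMixing G k := by
  induction hn : Fintype.card V generalizing V with
  | zero =>
    intro c c' _ _
    have : IsEmpty V := Fintype.card_eq_zero_iff.1 hn
    exact Subsingleton.elim c c' ▸ .refl
  | succ n ih =>
    intro c c' hc hc'
    obtain ⟨v, -, hv⟩ := hdeg univ (univ_nonempty_iff.2 (Fintype.card_pos_iff.1 (by omega)))
    have hmix := ih (G.comap (Subtype.val : {u // u ≠ v} → V))
      (hdeg.comap Subtype.val_injective) (by simp [hn])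
    obtain ⟨γ, hcγ, hγc'⟩ := exists_reflTransGen_kempeStep_lift hc (by omega)
      (hmix _ _ (hc.comap _) (hc'.comap _))
    have hγv : Function.update γ v (c' v) = c' := by
      funext x
      by_cases hx : x = v
      · simp [hx]
      · simpa [hx] using congrFun hγc' ⟨x, hx⟩
    rw [← hγv]
    refine hcγ.trans (reflTransGen_kempeStep_update (hc.of_reflTransGen_kempeStep hcγ) ?_)
    intro x hvx
    rw [show γ x = c' x from congrFun hγc' ⟨x, hvx.ne'⟩]
    exact hc' hvx.symm
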